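/- arXiv:1410.0757 — 5 statements merged into one kernel-verified Lean document; each statement's English description precedes it below -/
import Mathlib

section
/- For matrices $A, B$ in $M(m|n)$ (square matrices over $\mathbb{N}$ of size $m+n$), if $B \prec A$ in the order $\preceq$ (i.e. $B \preceq A$ and the restrictions to off-diagonal entries differ), then $\|B\| < \|A\|$, where $\|A\| = \sum_{1 \le i < j \le m+n} \frac{(j-i)(j-i+1)}{2}(a_{i,j} + a_{j,i})$. Consequently $B \preceq A$ implies $\|B\| \le \|A\|$. -/
open Finset

/-- The relation `B ⪯ A` on `(m+n)×(m+n)` matrices over `ℕ` via corner sums. -/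
def preceq (m n : ℕ) (B A : Matrix (Fin (m + n)) (Fin (m + n)) ℕ) : Prop :=
  (∀ s t : Fin (m + n), s < t →
    ∑ i ∈ Finset.univ.filter (fun i => i ≤ s),
      ∑ j ∈ Finset.univ.filter (fun j => t ≤ j), B i j ≤
    ∑ i ∈ Finset.univ.filter (fun i => i ≤ s),
      ∑ j ∈ Finset.univ.filter (fun j => t ≤ j), A i j) ∧
  (∀ s t : Fin (m + n), t < s →
    ∑ i ∈ Finset.univ.filter (fun i => s ≤ i),
      ∑ j ∈ Finset.univ.filter (fun j => j ≤ t), B i j ≤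
    ∑ i ∈ Finset.univ.filter (fun i => s ≤ i),
      ∑ j ∈ Finset.univ.filter (fun j => j ≤ t), A i j)

/-- `B ≺ A`: `B ⪯ A` and some off-diagonal entry differs. -/
def preclt (m n : ℕ) (B A : Matrix (Fin (m + n)) (Fin (m + n)) ℕ) : Prop :=
  preceq m n B A ∧ ∃ i j : Fin (m + n), i ≠ j ∧ B i j ≠ A i j

/-- The weighted norm `‖A‖ = ∑_{i<j} (j-i)(j-i+1)/2 · (a_{i,j} + a_{j,i})`. -/
def mnorm (m n : ℕ) (A : Matrix (Fin (m + n)) (Fin (m + n)) ℕ) : ℕ :=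
  ∑ p ∈ Finset.univ.filter (fun p : Fin (m + n) × Fin (m + n) => p.1 < p.2),
    ((p.2 : ℕ) - (p.1 : ℕ)) * ((p.2 : ℕ) - (p.1 : ℕ) + 1) / 2 * (A p.1 p.2 + A p.2 p.1)

/-!
The corner `{i ≤ s} × {j ≥ t}` (with `s < t`) contains the entry `a i j` exactly when
`i ≤ s < t ≤ j`, that is for `(j - i)(j - i + 1) / 2` corners. So the upper half of `‖A‖` is the
sum of all upper-right corner sums of `A`, and its lower half is the same for `Aᵀ`; summing the
inequalities defining `B ⪯ A` gives `‖B‖ ≤ ‖A‖`. For strictness, among the off-diagonal entries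
where `B` and `A` differ take one of maximal gap `|j - i|`: it is the only differing entry of its
corner, so the corner sums there differ and one inequality is strict.
-/

namespace Matrix

variable {N : ℕ} {M : Type*}

def gapWeight (i j : Fin N) : ℕ := ((j : ℕ) - i) * ((j : ℕ) - i + 1) / 2

lemma card_Icc_product_filter_lt (i j : Fin N) :
    #{x ∈ Icc i j ×ˢ Icc i j | x.1 < x.2} = gapWeight i j := by
  rw [card_product_filter_lt, Fin.card_Icc, Nat.choose_two_right, gapWeight]
  rcases le_or_gt i j with h | h
  · rw [Fin.le_def] at h
    rw [Nat.mul_comm, show (j : ℕ) + 1 - i - 1 = j - i by omega,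
      show (j : ℕ) + 1 - i = j - i + 1 by omega]
  · rw [Fin.lt_def] at h
    rw [show (j : ℕ) + 1 - i = 0 by omega, show (j : ℕ) - i = 0 by omega]

section AddCommMonoid

variable [AddCommMonoid M]

def upperCornerSum (A : Matrix (Fin N) (Fin N) M) (s t : Fin N) : M :=
  ∑ i ∈ univ.filter (fun i => i ≤ s), ∑ j ∈ univ.filter (fun j => t ≤ j), A i j

def upperNorm (A : Matrix (Fin N) (Fin N) M) : M :=
  ∑ p ∈ univ.filter (fun p : Fin N × Fin N => p.1 < p.2), gapWeight p.1 p.2 • A p.1 p.2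

lemma upperCornerSum_eq_sum_filter (A : Matrix (Fin N) (Fin N) M) (s t : Fin N) :
    A.upperCornerSum s t = ∑ q ∈ univ.filter (fun q : Fin N × Fin N => q.1 ≤ s ∧ t ≤ q.2),
      A q.1 q.2 :=
  (sum_finset_product (f := fun q => A q.1 q.2) _ _ _ (by simp)).symm

lemma sum_lower_corner_eq_upperCornerSum_transpose (A : Matrix (Fin N) (Fin N) M) (s t : Fin N) :
    ∑ i ∈ univ.filter (fun i => s ≤ i), ∑ j ∈ univ.filter (fun j => j ≤ t), A i j
      = Aᵀ.upperCornerSum t s :=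
  sum_comm

theorem upperNorm_eq_sum_upperCornerSum (A : Matrix (Fin N) (Fin N) M) :
    A.upperNorm = ∑ p ∈ univ.filter (fun p : Fin N × Fin N => p.1 < p.2),
      A.upperCornerSum p.1 p.2 := by
  simp_rw [upperCornerSum_eq_sum_filter]
  rw [sum_comm' (t' := univ.filter (fun q : Fin N × Fin N => q.1 < q.2))
    (s' := fun q => {x ∈ Icc q.1 q.2 ×ˢ Icc q.1 q.2 | x.1 < x.2})]
  · simp_rw [sum_const, card_Icc_product_filter_lt]
    rfl
  · intro p q
    simp only [mem_filter, mem_univ, true_and, mem_product, mem_Icc]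
    constructor
    · rintro ⟨hp, hq1, hq2⟩
      exact ⟨⟨⟨⟨hq1, hp.le.trans hq2⟩, hq1.trans hp.le, hq2⟩, hp⟩, hq1.trans_lt (hp.trans_le hq2)⟩
    · rintro ⟨⟨⟨⟨hq1, -⟩, -, hq2⟩, hp⟩, -⟩
      exact ⟨hp, hq1, hq2⟩

theorem exists_upperCornerSum_ne [IsRightCancelAdd M] {A B : Matrix (Fin N) (Fin N) M}
    {i j : Fin N} (hij : i < j) (hne : B i j ≠ A i j) :
    ∃ s t, s < t ∧ B.upperCornerSum s t ≠ A.upperCornerSum s t := by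
  classical
  set D := univ.filter (fun p : Fin N × Fin N => p.1 < p.2 ∧ B p.1 p.2 ≠ A p.1 p.2)
  obtain ⟨p, hpD, hmax⟩ :=
    D.exists_max_image (fun p => (p.2 : ℕ) - p.1) ⟨(i, j), by simp [D, hij, hne]⟩
  simp only [D, mem_filter, mem_univ, true_and] at hpD hmax
  refine ⟨p.1, p.2, hpD.1, fun hsum => hpD.2 ?_⟩
  set C := univ.filter (fun q : Fin N × Fin N => q.1 ≤ p.1 ∧ p.2 ≤ q.2)
  have hpC : p ∈ C := by simp [C]
  have hrest : ∑ q ∈ C.erase p, B q.1 q.2 = ∑ q ∈ C.erase p, A q.1 q.2 := by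
    refine sum_congr rfl fun q hq => ?_
    simp only [C, mem_erase, mem_filter, mem_univ, true_and, Fin.le_def] at hq
    by_contra hBA
    have hp := Fin.lt_def.1 hpD.1
    have hgap := hmax q ⟨Fin.lt_def.2 (by omega), hBA⟩
    exact hq.1 (Prod.ext (Fin.ext (by omega)) (Fin.ext (by omega)))
  rw [upperCornerSum_eq_sum_filter, upperCornerSum_eq_sum_filter, ← add_sum_erase _ _ hpC,
    ← add_sum_erase _ _ hpC, hrest] at hsum
  exact add_right_cancel hsum

end AddCommMonoid

section OrderedAddCommMonoid

variable [AddCommMonoid M] [PartialOrder M]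

def UpperCornerLE (B A : Matrix (Fin N) (Fin N) M) : Prop :=
  ∀ s t, s < t → B.upperCornerSum s t ≤ A.upperCornerSum s t

variable {A B : Matrix (Fin N) (Fin N) M}

theorem upperNorm_mono [IsOrderedAddMonoid M] (h : UpperCornerLE B A) :
    B.upperNorm ≤ A.upperNorm := by
  rw [upperNorm_eq_sum_upperCornerSum, upperNorm_eq_sum_upperCornerSum]
  exact sum_le_sum fun p hp => h _ _ (mem_filter.1 hp).2

theorem upperNorm_lt [IsOrderedCancelAddMonoid M] (h : UpperCornerLE B A) {i j : Fin N}
    (hij : i < j) (hne : B i j ≠ A i j) : B.upperNorm < A.upperNorm := by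
  obtain ⟨s, t, hst, hne'⟩ := exists_upperCornerSum_ne hij hne
  rw [upperNorm_eq_sum_upperCornerSum, upperNorm_eq_sum_upperCornerSum]
  exact sum_lt_sum (fun p hp => h _ _ (mem_filter.1 hp).2)
    ⟨(s, t), by simpa using hst, (h s t hst).lt_of_ne hne'⟩

end OrderedAddCommMonoid

end Matrix

open Matrix

lemma mnorm_eq_upperNorm_add_upperNorm_transpose {m n : ℕ}
    (A : Matrix (Fin (m + n)) (Fin (m + n)) ℕ) :
    mnorm m n A = A.upperNorm + Aᵀ.upperNorm := by
  simp only [mnorm, upperNorm, gapWeight, smul_eq_mul, transpose_apply, mul_add, sum_add_distrib]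

lemma preceq_iff_upperCornerLE {m n : ℕ} {A B : Matrix (Fin (m + n)) (Fin (m + n)) ℕ} :
    preceq m n B A ↔ UpperCornerLE B A ∧ UpperCornerLE Bᵀ Aᵀ := by
  simp only [preceq, UpperCornerLE, sum_lower_corner_eq_upperCornerSum_transpose]
  exact and_congr Iff.rfl ⟨fun h s t hst => h t s hst, fun h s t hst => h t s hst⟩

/-- `B ≺ A` implies `‖B‖ < ‖A‖`; consequently `B ⪯ A` implies
`‖B‖ ≤ ‖A‖`. -/
theorem norm_strict_mono (m n : ℕ) :
    (∀ A B : Matrix (Fin (m + n)) (Fin (m + n)) ℕ,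
      preclt m n B A → mnorm m n B < mnorm m n A) ∧
    (∀ A B : Matrix (Fin (m + n)) (Fin (m + n)) ℕ,
      preceq m n B A → mnorm m n B ≤ mnorm m n A) := by
  simp only [mnorm_eq_upperNorm_add_upperNorm_transpose]
  refine ⟨fun A B ⟨hle, i, j, hij, hne⟩ => ?_, fun A B hle => ?_⟩
  · obtain ⟨hU, hL⟩ := preceq_iff_upperCornerLE.1 hle
    rcases hij.lt_or_gt with h | h
    · exact add_lt_add_of_lt_of_le (upperNorm_lt hU h hne) (upperNorm_mono hL)
    · exact add_lt_add_of_le_of_lt (upperNorm_mono hU) (upperNorm_lt hL h hne)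
  · obtain ⟨hU, hL⟩ := preceq_iff_upperCornerLE.1 hle
    exact add_le_add (upperNorm_mono hU) (upperNorm_mono hL)
end

section
/- In $\mathbf{U}(\mathfrak{gl}_{m|n})$, the quantum root vectors $\mathsf{E}_{a,b}$ for $a < b$, defined recursively by $\mathsf{E}_{h,h+1} = \mathsf{E}_h$ and $\mathsf{E}_{a,b} = \mathsf{E}_{a,c}\mathsf{E}_{c,b} - \upsilon_c^{-1}\mathsf{E}_{c,b}\mathsf{E}_{a,c}$ for any $c$ with $a < c < b$, are independent of the choice of intermediate index $c$. -/
noncomputable section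

/-- The base field `ℚ(υ)`. -/
abbrev kk : Type := RatFunc ℚ

/-- Generators of the quantum supergroup `U(gl_{m|n})`: the `K_a^{±1}` for
`1 ≤ a ≤ m+n` and the `E_h, F_h` for `1 ≤ h < m+n` (indices `0`-based here). -/
inductive UGen (m n : ℕ) : Type
  | K : Fin (m + n) → UGen m n
  | Kinv : Fin (m + n) → UGen m n
  | E : Fin (m + n - 1) → UGen m n
  | F : Fin (m + n - 1) → UGen m n

namespace UGen

variable {m n : ℕ}

abbrev FA (m n : ℕ) : Type := FreeAlgebra kk (UGen m n)

def gK (a : Fin (m + n)) : FA m n := FreeAlgebra.ι kk (UGen.K a)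
def gKinv (a : Fin (m + n)) : FA m n := FreeAlgebra.ι kk (UGen.Kinv a)
def gE (h : Fin (m + n - 1)) : FA m n := FreeAlgebra.ι kk (UGen.E h)
def gF (h : Fin (m + n - 1)) : FA m n := FreeAlgebra.ι kk (UGen.F h)

/-- `υ_t` for a (`0`-based) position `t`:  `υ` if `t` is even (`t < m`), `υ⁻¹`
otherwise. -/
def vpos (m : ℕ) (t : ℕ) : kk := if t < m then RatFunc.X else (RatFunc.X : kk)⁻¹

/-- The super dot product exponent `e_a ·_s α_h = (-1)^{â}(δ_{a,h} - δ_{a,h+1})`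
(`0`-based indices). -/
def sexp (m : ℕ) (a : ℕ) (h : ℕ) : ℤ :=
  (if a < m then 1 else -1) * ((if a = h then 1 else 0) - (if a = h + 1 then 1 else 0))

/-- The sign `(-1)^{Ê_h Ê_k}` in the super commutator. -/
def pcoef (m : ℕ) (h k : ℕ) : kk := if h + 1 = m ∧ k + 1 = m then -1 else 1

/-- `1/(υ_h - υ_h^{-1})`. -/
def cH (m : ℕ) (h : ℕ) : kk := (vpos m h - (vpos m h)⁻¹)⁻¹

/-- The `Fin (m+n)`-index of position `h`. -/
def idx0 (h : Fin (m + n - 1)) : Fin (m + n) :=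
  ⟨h.val, by have := h.isLt; omega⟩

/-- The `Fin (m+n)`-index of position `h+1`. -/
def idx1 (h : Fin (m + n - 1)) : Fin (m + n) :=
  ⟨h.val + 1, by have := h.isLt; omega⟩

/-- The defining relations (QS1)–(QS6) of the quantum supergroup `U(gl_{m|n})`. -/
inductive URel (m n : ℕ) : FA m n → FA m n → Prop
  -- (QS1)
  | K_Kinv (a : Fin (m + n)) : URel m n (gK a * gKinv a) 1
  | Kinv_K (a : Fin (m + n)) : URel m n (gKinv a * gK a) 1
  | K_comm (a b : Fin (m + n)) : URel m n (gK a * gK b) (gK b * gK a)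
  -- (QS2)
  | KE (a : Fin (m + n)) (h : Fin (m + n - 1)) :
      URel m n (gK a * gE h)
        (((RatFunc.X : kk) ^ (sexp m a.val h.val)) • (gE h * gK a))
  | KF (a : Fin (m + n)) (h : Fin (m + n - 1)) :
      URel m n (gK a * gF h)
        (((RatFunc.X : kk) ^ (-(sexp m a.val h.val))) • (gF h * gK a))
  -- (QS3)
  | EF (h k : Fin (m + n - 1)) :
      URel m n (gE h * gF k - pcoef m h.val k.val • (gF k * gE h))
        (if h = k then
          cH m h.val • (gK (idx0 h) * gKinv (idx1 h) - gKinv (idx0 h) * gK (idx1 h))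
        else 0)
  -- (QS4)
  | EE_comm (h k : Fin (m + n - 1)) (hdist : h.val + 1 < k.val ∨ k.val + 1 < h.val) :
      URel m n (gE h * gE k) (gE k * gE h)
  | FF_comm (h k : Fin (m + n - 1)) (hdist : h.val + 1 < k.val ∨ k.val + 1 < h.val) :
      URel m n (gF h * gF k) (gF k * gF h)
  -- (QS5)
  | serreE (h k : Fin (m + n - 1)) (hodd : h.val + 1 ≠ m)
      (hadj : k.val = h.val + 1 ∨ h.val = k.val + 1) :
      URel m n
        (gE h * gE h * gE k - (vpos m h.val + (vpos m h.val)⁻¹) • (gE h * gE k * gE h) +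
          gE k * gE h * gE h) 0
  | serreF (h k : Fin (m + n - 1)) (hodd : h.val + 1 ≠ m)
      (hadj : k.val = h.val + 1 ∨ h.val = k.val + 1) :
      URel m n
        (gF h * gF h * gF k - (vpos m h.val + (vpos m h.val)⁻¹) • (gF h * gF k * gF h) +
          gF k * gF h * gF h) 0
  -- (QS6)
  | Esq (h : Fin (m + n - 1)) (hodd : h.val + 1 = m) : URel m n (gE h * gE h) 0
  | Fsq (h : Fin (m + n - 1)) (hodd : h.val + 1 = m) : URel m n (gF h * gF h) 0
  | higherE (h0 h1 h2 : Fin (m + n - 1)) (hm2 : 2 ≤ m)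
      (h0v : h0.val + 2 = m) (h1v : h1.val + 1 = m) (h2v : h2.val = m) :
      URel m n
        (gE h1 *
          (gE h0 * gE h1 * gE h2 - (RatFunc.X : kk) • (gE h0 * gE h2 * gE h1) -
            ((RatFunc.X : kk)⁻¹) • (gE h1 * gE h2 * gE h0) + gE h2 * gE h1 * gE h0) +
          (gE h0 * gE h1 * gE h2 - (RatFunc.X : kk) • (gE h0 * gE h2 * gE h1) -
            ((RatFunc.X : kk)⁻¹) • (gE h1 * gE h2 * gE h0) + gE h2 * gE h1 * gE h0) *
          gE h1) 0
  | higherF (h0 h1 h2 : Fin (m + n - 1)) (hm2 : 2 ≤ m)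
      (h0v : h0.val + 2 = m) (h1v : h1.val + 1 = m) (h2v : h2.val = m) :
      URel m n
        (gF h1 *
          (gF h2 * gF h1 * gF h0 - ((RatFunc.X : kk)⁻¹) • (gF h1 * gF h2 * gF h0) -
            (RatFunc.X : kk) • (gF h0 * gF h2 * gF h1) + gF h0 * gF h1 * gF h2) +
          (gF h2 * gF h1 * gF h0 - ((RatFunc.X : kk)⁻¹) • (gF h1 * gF h2 * gF h0) -
            (RatFunc.X : kk) • (gF h0 * gF h2 * gF h1) + gF h0 * gF h1 * gF h2) *
          gF h1) 0

end UGen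

/-- The quantum supergroup `U(gl_{m|n})`, presented by generators and the relations
(QS1)–(QS6). -/
abbrev Usup (m n : ℕ) : Type := RingQuot (UGen.URel m n)

/-- The generators of `U(gl_{m|n})` as elements of the quotient. -/
def uK (m n : ℕ) (a : Fin (m + n)) : Usup m n :=
  RingQuot.mkAlgHom kk (UGen.URel m n) (UGen.gK a)
def uKinv (m n : ℕ) (a : Fin (m + n)) : Usup m n :=
  RingQuot.mkAlgHom kk (UGen.URel m n) (UGen.gKinv a)
def uE (m n : ℕ) (h : Fin (m + n - 1)) : Usup m n :=
  RingQuot.mkAlgHom kk (UGen.URel m n) (UGen.gE h)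
def uF (m n : ℕ) (h : Fin (m + n - 1)) : Usup m n :=
  RingQuot.mkAlgHom kk (UGen.URel m n) (UGen.gF h)

end

noncomputable section

/-- `E_h` for a natural-number index (junk value `0` out of range). -/
def Egen (m n : ℕ) (h : ℕ) : Usup m n :=
  if hh : h < m + n - 1 then uE m n ⟨h, hh⟩ else 0

/-- The quantum root vector `E_{a,b}` (for `0`-based positions `a < b`), defined
recursively by `E_{a,a+1} = E_a` and
`E_{a,b} = E_{a,b-1}E_{b-1,b} - υ_{b-1}^{-1} E_{b-1,b}E_{a,b-1}` (taking `c = b-1`). -/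
def Ev (m n : ℕ) (a : ℕ) : ℕ → Usup m n
  | 0 => 0
  | b + 1 =>
    if b = a then Egen m n a
    else if b ≤ a then 0
    else Ev m n a b * Egen m n b - (UGen.vpos m b)⁻¹ • (Egen m n b * Ev m n a b)

/-- Distant generators commute. -/
lemma Egen_comm (m n j h : ℕ) (hjh : j + 1 < h) :
    Egen m n j * Egen m n h = Egen m n h * Egen m n j := by
  unfold Egen
  by_cases hj : j < m + n - 1
  · by_cases hh : h < m + n - 1
    · rw [dif_pos hj, dif_pos hh]
      have := RingQuot.mkAlgHom_rel kk
        (UGen.URel.EE_comm (m := m) (n := n) ⟨j, hj⟩ ⟨h, hh⟩ (Or.inl hjh))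
      simpa [uE, map_mul] using this
    · rw [dif_neg hh]; simp
  · rw [dif_neg hj]; simp

/-- `E_h` commutes with `E_{a,c}` whenever `c < h`. -/
lemma Egen_Ev_comm (m n a : ℕ) : ∀ c h : ℕ, c < h →
    Egen m n h * Ev m n a c = Ev m n a c * Egen m n h := by
  intro c
  induction c with
  | zero => intro h _; simp [Ev]
  | succ c ih =>
    intro h hch
    have hch' : c < h := Nat.lt_of_succ_lt hch
    by_cases hca : c = a
    · subst hca
      simp only [Ev, if_pos rfl]
      exact (Egen_comm m n c h hch).symm
    · by_cases hle : c ≤ a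
      · simp [Ev, hca, hle]
      · simp only [Ev, if_neg hca, if_neg hle]
        have h1 : Egen m n h * Ev m n a c = Ev m n a c * Egen m n h := ih h hch'
        have h2 : Egen m n c * Egen m n h = Egen m n h * Egen m n c :=
          Egen_comm m n c h hch
        rw [mul_sub, sub_mul, mul_smul_comm, smul_mul_assoc]
        congr 1
        · rw [← mul_assoc, h1, mul_assoc, ← h2, ← mul_assoc]
        · congr 1
          rw [← mul_assoc, ← h2, mul_assoc, h1, ← mul_assoc]

/-- The key algebraic identity used in the induction step. -/
lemma key_identity {R : Type*} [Ring R] [Algebra kk R] (X Y Eb : R) (s t : kk)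
    (h : X * Eb = Eb * X) :
    (X * Y - s • (Y * X)) * Eb - t • (Eb * (X * Y - s • (Y * X))) =
      X * (Y * Eb - t • (Eb * Y)) - s • ((Y * Eb - t • (Eb * Y)) * X) := by
  have h1 : Y * X * Eb = Y * Eb * X := by rw [mul_assoc, h, ← mul_assoc]
  have h2 : Eb * (X * Y) = X * Eb * Y := by rw [← mul_assoc, ← h]
  simp only [mul_sub, sub_mul, smul_mul_assoc, mul_smul_comm, smul_sub, smul_smul,
    mul_assoc]
  rw [h, show X * (Eb * Y) = Eb * (X * Y) from by rw [← mul_assoc, h, mul_assoc],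
    mul_comm t s]
  abel

/-- the quantum root vectors are independent of the choice of the
intermediate index `c`: for all `a < c < b` one has
`E_{a,b} = E_{a,c}E_{c,b} - υ_c^{-1}E_{c,b}E_{a,c}`. -/
theorem root_vectors_well_defined (m n : ℕ) (hm : 1 ≤ m) (hn : 1 ≤ n)
    (a c b : ℕ) (hac : a < c) (hcb : c < b) (hb : b < m + n) :
    Ev m n a b =
      Ev m n a c * Ev m n c b - (UGen.vpos m c)⁻¹ • (Ev m n c b * Ev m n a c) := by
  clear hb hm hn
  induction b, hcb using Nat.le_induction with
  | base =>
    simp [Ev, hac.ne', not_le.mpr hac]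
  | succ b hb ih =>
    have hab : a < b := by omega
    have hcb' : c < b := hb
    have e1 : Ev m n a (b + 1) =
        Ev m n a b * Egen m n b - (UGen.vpos m b)⁻¹ • (Egen m n b * Ev m n a b) := by
      simp only [Ev, if_neg hab.ne', if_neg (not_le.mpr hab)]
    have e2 : Ev m n c (b + 1) =
        Ev m n c b * Egen m n b - (UGen.vpos m b)⁻¹ • (Egen m n b * Ev m n c b) := by
      simp only [Ev, if_neg hcb'.ne', if_neg (not_le.mpr hcb')]
    rw [e1, e2, ih]
    exact key_identity _ _ _ _ _ (Egen_Ev_comm m n a c b hcb').symm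

end
end

section
/- For a partition $\pi \in \Pi(r)_{m|n}$ (i.e. with $\pi_{m+1} \le n$) and the composition $\tilde\pi = (\pi_1,\ldots,\pi_m \mid (\pi_{m+1},\ldots,\pi_{m+n})^t)$, the set $\mathbf{T}^{su}(\pi, \tilde\pi)$ of semistandard $\pi$-supertableaux of content $\tilde\pi$ contains exactly one element. -/
open Finset

/-- The cells of the Young diagram of `π` (a partition of `r`), as a finite set of
pairs `(row, column)` (`0`-based). -/
def cells (r : ℕ) (pi : ℕ → ℕ) : Finset (ℕ × ℕ) :=
  (Finset.range r ×ˢ Finset.range r).filter (fun p => p.2 < pi p.1)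

/-- `T` is a semistandard `π`-supertableau of content `μ` (entries `0`-based, so the
"even" entries are those `< m` and the "odd" ones those in `[m, m+n)`):
entries lie in `[0, m+n)`; each value `k` occurs `μ k` times; rows and columns weakly
increase; even entries strictly increase down columns; odd entries strictly increase
along rows. -/
def IsSSSupertableau (m n r : ℕ) (pi : ℕ → ℕ) (T : ℕ × ℕ → ℕ) (mu : ℕ → ℕ) : Prop :=
  (∀ p ∈ cells r pi, T p < m + n) ∧
  (∀ k : ℕ, ((cells r pi).filter (fun p => T p = k)).card = mu k) ∧
  (∀ i j : ℕ, j + 1 < pi i →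
    T (i, j) ≤ T (i, j + 1) ∧ (m ≤ T (i, j) → T (i, j) < T (i, j + 1))) ∧
  (∀ i j : ℕ, j < pi (i + 1) →
    T (i, j) ≤ T (i + 1, j) ∧ (T (i, j) < m → T (i, j) < T (i + 1, j)))

/-- The composition `π̃ = (π_1,…,π_m ∣ (π_{m+1},…,π_{m+n})^t)` attached to
`π ∈ Π(r)_{m|n}` (`0`-based index `k`). -/
def tildePi (m r : ℕ) (pi : ℕ → ℕ) (k : ℕ) : ℕ :=
  if k < m then pi k
  else ((Finset.range r).filter (fun i => m ≤ i ∧ k - m < pi i)).card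

/-!
Let `S` be the tableau whose row `i < m` is filled with `i` and whose cell `(i, j)` with `i ≥ m`
holds `m + j`; its content is `π̃`. Strictness of even entries down columns and of odd entries
along rows forces every semistandard supertableau `T` to satisfy `S ≤ T` cellwise. The sum of
the entries of a tableau depends only on its content, so a `T` of content `π̃` has the same entry
sum as `S`, and therefore `T = S`.
-/

def superstandard (m : ℕ) (p : ℕ × ℕ) : ℕ := if p.1 < m then p.1 else m + p.2

namespace SSSupertableau

variable {m n r : ℕ} {pi : ℕ → ℕ}

lemma le_of_sum_eq (hanti : Antitone pi) (hsum : ∑ i ∈ range r, pi i = r)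
    (hvanish : ∀ i, r ≤ i → pi i = 0) (i : ℕ) : pi i ≤ r := by
  rcases Nat.eq_zero_or_pos r with hr | hr
  · simp [hvanish i (by omega)]
  · calc pi i ≤ pi 0 := hanti (Nat.zero_le i)
      _ ≤ ∑ i ∈ range r, pi i := single_le_sum (fun _ _ => Nat.zero_le _) (mem_range.mpr hr)
      _ = r := hsum

lemma mem_cells_iff (hle : ∀ i, pi i ≤ r) {p : ℕ × ℕ} :
    p ∈ cells r pi ↔ p.1 < r ∧ p.2 < pi p.1 := by
  simp only [cells, mem_filter, mem_product, mem_range]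
  exact ⟨fun h => ⟨h.1.1, h.2⟩, fun h => ⟨⟨h.1, h.2.trans_le (hle p.1)⟩, h.2⟩⟩

lemma card_filter_superstandard_eq_of_lt (hle : ∀ i, pi i ≤ r)
    (hvanish : ∀ i, r ≤ i → pi i = 0) {k : ℕ} (hk : k < m) :
    #{p ∈ cells r pi | superstandard m p = k} = pi k := by
  have hrow : {p ∈ cells r pi | superstandard m p = k} = (range (pi k)).image (k, ·) := by
    ext ⟨i, j⟩
    simp only [mem_filter, mem_cells_iff hle, mem_image, mem_range, Prod.mk.injEq]
    unfold superstandard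
    constructor
    · rintro ⟨⟨-, hj⟩, h⟩
      split_ifs at h with hi
      · subst h; exact ⟨j, hj, rfl, rfl⟩
      · omega
    · rintro ⟨j, hj, rfl, rfl⟩
      have hkr : k < r := by
        by_contra h
        rw [hvanish k (by omega)] at hj
        omega
      exact ⟨⟨hkr, hj⟩, if_pos hk⟩
  rw [hrow, card_image_of_injective _ (Prod.mk_right_injective k), card_range]

lemma card_filter_superstandard_eq_of_le (hle : ∀ i, pi i ≤ r) {k : ℕ} (hk : m ≤ k) :
    #{p ∈ cells r pi | superstandard m p = k} = #{i ∈ range r | m ≤ i ∧ k - m < pi i} := by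
  have hcol : {p ∈ cells r pi | superstandard m p = k}
      = {i ∈ range r | m ≤ i ∧ k - m < pi i}.image (·, k - m) := by
    ext ⟨i, j⟩
    simp only [mem_filter, mem_cells_iff hle, mem_image, mem_range, Prod.mk.injEq]
    unfold superstandard
    constructor
    · rintro ⟨⟨hi, hj⟩, h⟩
      split_ifs at h with him
      · omega
      · exact ⟨i, ⟨hi, by omega, by omega⟩, rfl, by omega⟩
    · rintro ⟨i, ⟨hi, him, hj⟩, rfl, rfl⟩
      exact ⟨⟨hi, hj⟩, by rw [if_neg (by omega)]; omega⟩
  rw [hcol, card_image_of_injective _ (Prod.mk_left_injective (k - m))]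

lemma isSSSupertableau_superstandard (hanti : Antitone pi)
    (hsum : ∑ i ∈ range r, pi i = r) (hvanish : ∀ i, r ≤ i → pi i = 0) (hmn : pi m ≤ n) :
    IsSSSupertableau m n r pi (superstandard m) (tildePi m r pi) := by
  have hle := le_of_sum_eq hanti hsum hvanish
  refine ⟨fun p hp => ?_, fun k => ?_, fun i j _ => ?_, fun i j _ => ?_⟩
  · rw [mem_cells_iff hle] at hp
    unfold superstandard
    split_ifs with h
    · omega
    · have : pi p.1 ≤ pi m := hanti (by omega)
      omega
  · rw [tildePi]
    split_ifs with hk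
    · exact card_filter_superstandard_eq_of_lt hle hvanish hk
    · exact card_filter_superstandard_eq_of_le hle (by omega)
  all_goals simp only [superstandard]; split_ifs <;> omega

variable {T : ℕ × ℕ → ℕ} {mu : ℕ → ℕ}

/-- Even entries strictly increase down columns, so row `i` holds entries `≥ min i m`. -/
lemma min_le_of_isSSSupertableau (hanti : Antitone pi) (hT : IsSSSupertableau m n r pi T mu) :
    ∀ i j, j < pi i → min i m ≤ T (i, j) := by
  intro i
  induction i with
  | zero => intro j _; simp
  | succ i ih =>
    intro j hj
    have hcol := hT.2.2.2 i j hj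
    have hih := ih j (hj.trans_le (hanti i.le_succ))
    by_cases heven : T (i, j) < m
    · have := hcol.2 heven; omega
    · have := hcol.1; omega

lemma superstandard_le_of_isSSSupertableau (hanti : Antitone pi)
    (hT : IsSSSupertableau m n r pi T mu) :
    ∀ i j, j < pi i → superstandard m (i, j) ≤ T (i, j) := by
  intro i j hj
  by_cases hi : i < m
  · simpa [superstandard, hi, min_eq_left hi.le] using min_le_of_isSSSupertableau hanti hT i j hj
  · simp only [superstandard, if_neg hi]
    -- in rows `i ≥ m` all entries are odd, so they strictly increase along the row
    induction j with
    | zero => simpa [min_eq_right (not_lt.mp hi)] using min_le_of_isSSSupertableau hanti hT i 0 hj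
    | succ j ih =>
      have := hT.2.2.1 i j hj
      have := ih (by omega)
      omega

lemma sum_eq_of_isSSSupertableau (hT : IsSSSupertableau m n r pi T mu) :
    ∑ p ∈ cells r pi, T p = ∑ k ∈ range (m + n), k * mu k := by
  rw [← sum_fiberwise_of_maps_to (fun p hp => mem_range.mpr (hT.1 p hp))]
  refine sum_congr rfl fun k _ => ?_
  rw [sum_const_nat fun p hp => (mem_filter.mp hp).2, hT.2.1 k, mul_comm]

lemma eq_superstandard_of_isSSSupertableau (hanti : Antitone pi)
    (hsum : ∑ i ∈ range r, pi i = r) (hvanish : ∀ i, r ≤ i → pi i = 0) (hmn : pi m ≤ n)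
    (hT : IsSSSupertableau m n r pi T (tildePi m r pi)) :
    ∀ p ∈ cells r pi, superstandard m p = T p := by
  have hle : ∀ p ∈ cells r pi, superstandard m p ≤ T p := fun p hp =>
    superstandard_le_of_isSSSupertableau hanti hT p.1 p.2 (mem_filter.mp hp).2
  refine (sum_eq_sum_iff_of_le hle).mp ?_
  rw [sum_eq_of_isSSSupertableau hT,
    sum_eq_of_isSSSupertableau (isSSSupertableau_superstandard hanti hsum hvanish hmn)]

end SSSupertableau

open SSSupertableau in
/-- for a partition `π` of `r` with `π_{m+1} ≤ n`, there is exactly one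
semistandard `π`-supertableau of content `π̃`. -/
theorem unique_superstandard_tableau (m n r : ℕ) (pi : ℕ → ℕ)
    (hanti : Antitone pi) (hsum : ∑ i ∈ Finset.range r, pi i = r)
    (hvanish : ∀ i, r ≤ i → pi i = 0) (hmn : pi m ≤ n) :
    (∃ T : ℕ × ℕ → ℕ, IsSSSupertableau m n r pi T (tildePi m r pi)) ∧
    (∀ T T' : ℕ × ℕ → ℕ, IsSSSupertableau m n r pi T (tildePi m r pi) →
      IsSSSupertableau m n r pi T' (tildePi m r pi) →
      ∀ p ∈ cells r pi, T p = T' p) := by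
  refine ⟨⟨superstandard m, isSSSupertableau_superstandard hanti hsum hvanish hmn⟩, ?_⟩
  intro T T' hT hT' p hp
  rw [← eq_superstandard_of_isSSSupertableau hanti hsum hvanish hmn hT p hp,
    eq_superstandard_of_isSSSupertableau hanti hsum hvanish hmn hT' p hp]
end

section
/- Let $\pi \in \Pi(r)_{m|n}$ and $\mu \in \Lambda(m|n,r)$. If the set $\mathbf{T}^{su}(\pi,\mu)$ of semistandard $\pi$-supertableaux of content $\mu$ is nonempty, then $\tilde\pi \unrhd \mu$ in the dominance order, i.e. $\tilde\pi_1 + \cdots + \tilde\pi_s \ge \mu_1 + \cdots + \mu_s$ for all $1 \le s \le m+n$. -/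
open Finset

/-!
An even entry `k < m` of a semistandard supertableau lies in a row `i ≤ k`, since even entries
strictly increase down columns; an entry in row `i ≥ m` and column `j` is at least `m + j`, since
the first entry of such a row is odd and odd entries strictly increase along rows. Hence the cells
with entries `< s` inject into the first `s` rows of the diagram of `π̃`: keep the cells in the
first `m` rows where they are and transpose the others, which is exactly how `π̃` is built from `π`.
-/

/-- The `k`-th row of the diagram of `π̃`; for `k ≥ m` its boxes are labelled by the rows `i ≥ m`
of `π` of length `> k - m`. -/
def tildeRow (m r : ℕ) (pi : ℕ → ℕ) (k : ℕ) : Finset ℕ :=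
  if k < m then range (pi k) else (range r).filter (fun i => m ≤ i ∧ k - m < pi i)

theorem card_tildeRow (m r : ℕ) (pi : ℕ → ℕ) (k : ℕ) :
    #(tildeRow m r pi k) = tildePi m r pi k := by
  unfold tildeRow tildePi
  split_ifs <;> simp

def superCell (m : ℕ) (p : ℕ × ℕ) : Σ _ : ℕ, ℕ :=
  if p.1 < m then ⟨p.1, p.2⟩ else ⟨m + p.2, p.1⟩

theorem superCell_injective (m : ℕ) : Function.Injective (superCell m) := by
  rintro ⟨i, j⟩ ⟨i', j'⟩ h
  unfold superCell at h
  split_ifs at h <;> simp only [Sigma.mk.inj_iff, heq_eq_eq] at h <;> grind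

theorem Finset.card_filter_lt_eq_sum {α : Type*} (A : Finset α) (f : α → ℕ) (s : ℕ) :
    #(A.filter (f · < s)) = ∑ k ∈ range s, #(A.filter (f · = k)) := by
  rw [card_eq_sum_card_fiberwise (f := f) (t := range s)
    fun p hp => mem_range.2 (mem_filter.1 hp).2]
  refine sum_congr rfl fun k hk => congrArg card ?_
  rw [filter_filter]
  exact filter_congr fun p _ => by simp only [mem_range] at hk; omega

namespace IsSSSupertableau

variable {m n r : ℕ} {pi : ℕ → ℕ} {T : ℕ × ℕ → ℕ} {mu : ℕ → ℕ}

theorem row_le_of_lt (hT : IsSSSupertableau m n r pi T mu) (hanti : Antitone pi) :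
    ∀ i j, j < pi i → T (i, j) < m → i ≤ T (i, j) := by
  intro i
  induction i with
  | zero => intro j _ _; exact Nat.zero_le _
  | succ i ih =>
    intro j hj hTm
    obtain ⟨hle, hlt⟩ := hT.2.2.2 i j hj
    have hT_even : T (i, j) < m := hle.trans_lt hTm
    have := ih j (hj.trans_le (hanti i.le_succ)) hT_even
    have := hlt hT_even
    omega

theorem add_col_le_of_le_row (hT : IsSSSupertableau m n r pi T mu) (hanti : Antitone pi)
    {i : ℕ} (hi : m ≤ i) : ∀ j, j < pi i → m + j ≤ T (i, j) := by
  intro j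
  induction j with
  | zero =>
    intro hj
    by_contra h
    have := hT.row_le_of_lt hanti i 0 hj (by omega)
    omega
  | succ j ih =>
    intro hj
    have := ih (by omega)
    have := (hT.2.2.1 i j hj).2 (by omega)
    omega

theorem superCell_mem (hT : IsSSSupertableau m n r pi T mu) (hanti : Antitone pi)
    {s : ℕ} {p : ℕ × ℕ} (hp : p ∈ cells r pi) (hTp : T p < s) :
    superCell m p ∈ (range s).sigma (tildeRow m r pi) := by
  obtain ⟨i, j⟩ := p
  simp only [cells, mem_filter, mem_product, mem_range] at hp
  obtain ⟨⟨hi, -⟩, hj⟩ := hp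
  by_cases him : i < m
  · have : T (i, j) < m → i ≤ T (i, j) := hT.row_le_of_lt hanti i j hj
    simp only [superCell, tildeRow, him, if_true, mem_sigma, mem_range]
    omega
  · have := hT.add_col_le_of_le_row hanti (not_lt.1 him) j hj
    simp only [superCell, tildeRow, him, if_false, mem_sigma, mem_filter, mem_range,
      show ¬ m + j < m by omega, Nat.add_sub_cancel_left]
    omega

end IsSSSupertableau

theorem supertableau_dominance_general (m n r : ℕ) (pi : ℕ → ℕ)
    (hanti : Antitone pi)
    (mu : ℕ → ℕ)
    (T : ℕ × ℕ → ℕ) (hT : IsSSSupertableau m n r pi T mu) :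
    ∀ s : ℕ, s ≤ m + n →
      ∑ k ∈ Finset.range s, mu k ≤ ∑ k ∈ Finset.range s, tildePi m r pi k := by
  intro s _
  calc ∑ k ∈ range s, mu k = #((cells r pi).filter (T · < s)) := by
        simp only [card_filter_lt_eq_sum, hT.2.1]
    _ ≤ #((range s).sigma (tildeRow m r pi)) :=
        card_le_card_of_injOn (superCell m) (fun _ hp => hT.superCell_mem hanti
          (mem_filter.1 hp).1 (mem_filter.1 hp).2) (superCell_injective m).injOn
    _ = ∑ k ∈ range s, tildePi m r pi k := by simp only [card_sigma, card_tildeRow]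

/-- if there exists a semistandard `π`-supertableau of content `μ`,
then `π̃` dominates `μ`: all partial sums satisfy `π̃_1+⋯+π̃_s ≥ μ_1+⋯+μ_s`. -/
theorem supertableau_dominance (m n r : ℕ) (pi : ℕ → ℕ)
    (hanti : Antitone pi) (hsum : ∑ i ∈ Finset.range r, pi i = r)
    (hvanish : ∀ i, r ≤ i → pi i = 0) (hmn : pi m ≤ n)
    (mu : ℕ → ℕ) (hmu : ∑ k ∈ Finset.range (m + n), mu k = r)
    (T : ℕ × ℕ → ℕ) (hT : IsSSSupertableau m n r pi T mu) :
    ∀ s : ℕ, s ≤ m + n →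
      ∑ k ∈ Finset.range s, mu k ≤ ∑ k ∈ Finset.range s, tildePi m r pi k :=
  supertableau_dominance_general m n r pi hanti mu T hT
end

section
/- For any matrix $A = (a_{i,j}) \in M(m|n,r)$ obtained as $\jmath(\lambda,d,\mu)$ with $d \in \mathcal{D}^\circ_{\lambda\mu}$, the entries satisfy $a_{i,j} \in \{0,1\}$ whenever $i \le m < j$ or $j \le m < i$. -/
/-! Two distinct points `d a ≠ d b` of `R_i^λ ∩ d(R_j^μ)` give the transposition `w = (a b)`,
which stabilises the blocks of `μ` and moves only the block `R_j^μ`, while `d w d⁻¹ = (d a  d b)`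
does the same for `λ` and `R_i^λ`. When one of `i, j` is even and the other odd, `w ≠ 1` lies in
one of the trivial intersections defining `𝒟°_{λμ}`. -/

open Finset Equiv

/-- Partial sum of the parts strictly before index `i`. -/
def psum {N : ℕ} (lam : Fin N → ℕ) (i : Fin N) : ℕ :=
  ∑ j ∈ Finset.univ.filter (fun j => j < i), lam j

/-- The block `R_i^λ` of a composition of `r`. -/
def Rblock {N r : ℕ} (lam : Fin N → ℕ) (i : Fin N) : Finset (Fin r) :=
  Finset.univ.filter (fun x : Fin r => psum lam i ≤ (x : ℕ) ∧ (x : ℕ) < psum lam i + lam i)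

/-- Membership in the parabolic subgroup `𝔖_λ`. -/
def inParab {N r : ℕ} (lam : Fin N → ℕ) (w : Perm (Fin r)) : Prop :=
  ∀ i : Fin N, ∀ x ∈ Rblock (r := r) lam i, w x ∈ Rblock (r := r) lam i

/-- Membership in the even parabolic `𝔖_{λ^{(0)}} = 𝔖_{(λ^{(0)}|1^{r_1})}`. -/
def inParabEven {m n r : ℕ} (lam : Fin (m + n) → ℕ) (w : Perm (Fin r)) : Prop :=
  (∀ i : Fin (m + n), (i : ℕ) < m → ∀ x ∈ Rblock (r := r) lam i, w x ∈ Rblock (r := r) lam i) ∧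
  (∀ i : Fin (m + n), m ≤ (i : ℕ) → ∀ x ∈ Rblock (r := r) lam i, w x = x)

/-- Membership in the odd parabolic `𝔖_{λ^{(1)}} = 𝔖_{(1^{r_0}|λ^{(1)})}`. -/
def inParabOdd {m n r : ℕ} (lam : Fin (m + n) → ℕ) (w : Perm (Fin r)) : Prop :=
  (∀ i : Fin (m + n), m ≤ (i : ℕ) → ∀ x ∈ Rblock (r := r) lam i, w x ∈ Rblock (r := r) lam i) ∧
  (∀ i : Fin (m + n), (i : ℕ) < m → ∀ x ∈ Rblock (r := r) lam i, w x = x)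

/-- Length (number of inversions) of a permutation. -/
def len {r : ℕ} (w : Perm (Fin r)) : ℕ :=
  (Finset.univ.filter (fun p : Fin r × Fin r => p.1 < p.2 ∧ w p.2 < w p.1)).card

/-- `d` is the shortest representative of the double coset `𝔖_λ d 𝔖_μ`. -/
def isDistinguished {N r : ℕ} (lam mu : Fin N → ℕ) (d : Perm (Fin r)) : Prop :=
  ∀ u v : Perm (Fin r), inParab (r := r) lam u → inParab (r := r) mu v →
    len d ≤ len (u * d * v)

/-- The matrix `ȷ(λ,d,μ)` with `a_{i,j} = |R_i^λ ∩ d(R_j^μ)|`. -/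
def jmath {N r : ℕ} (lam mu : Fin N → ℕ) (d : Perm (Fin r)) :
    Matrix (Fin N) (Fin N) ℕ :=
  fun i j => ((Rblock (r := r) lam i) ∩ (Rblock (r := r) mu j).image d).card

section Blocks

variable {N r : ℕ} (lam : Fin N → ℕ)

lemma psum_add_le_psum_of_lt {i i' : Fin N} (h : i < i') : psum lam i + lam i ≤ psum lam i' := by
  calc psum lam i + lam i = ∑ j ∈ insert i (univ.filter (· < i)), lam j := by
        rw [sum_insert (by simp), add_comm]; rfl
    _ ≤ psum lam i' := by
        refine sum_le_sum_of_subset fun j hj => ?_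
        simp only [mem_insert, mem_filter, mem_univ, true_and] at hj ⊢
        rcases hj with rfl | hj
        exacts [h, hj.trans h]

lemma lt_of_mem_Rblock_of_lt {i i' : Fin N} (h : i < i') {x y : Fin r}
    (hx : x ∈ Rblock lam i) (hy : y ∈ Rblock lam i') : x < y := by
  simp only [Rblock, mem_filter, mem_univ, true_and] at hx hy
  have := psum_add_le_psum_of_lt lam h
  exact Fin.lt_def.mpr (by omega)

lemma eq_of_mem_Rblock {i i' : Fin N} {x : Fin r}
    (h : x ∈ Rblock lam i) (h' : x ∈ Rblock lam i') : i = i' := by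
  by_contra hne
  rcases lt_or_gt_of_ne hne with hlt | hlt
  · exact lt_irrefl x (lt_of_mem_Rblock_of_lt lam hlt h h')
  · exact lt_irrefl x (lt_of_mem_Rblock_of_lt lam hlt h' h)

variable {lam} {i : Fin N} {a b : Fin r}

lemma swap_mem_Rblock (ha : a ∈ Rblock lam i) (hb : b ∈ Rblock lam i) {i' : Fin N} {x : Fin r}
    (hx : x ∈ Rblock lam i') : swap a b x ∈ Rblock lam i' := by
  rcases eq_or_ne x a with rfl | hxa
  · rwa [swap_apply_left, ← eq_of_mem_Rblock lam ha hx]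
  rcases eq_or_ne x b with rfl | hxb
  · rwa [swap_apply_right, ← eq_of_mem_Rblock lam hb hx]
  rwa [swap_apply_of_ne_of_ne hxa hxb]

lemma swap_apply_of_mem_Rblock_of_ne (ha : a ∈ Rblock lam i) (hb : b ∈ Rblock lam i)
    {i' : Fin N} (hi' : i' ≠ i) {x : Fin r} (hx : x ∈ Rblock lam i') : swap a b x = x :=
  swap_apply_of_ne_of_ne (fun h => hi' (eq_of_mem_Rblock lam (h ▸ hx) ha))
    (fun h => hi' (eq_of_mem_Rblock lam (h ▸ hx) hb))

lemma jmath_le_one_of_swap_eq_one (mu : Fin N → ℕ) (d : Perm (Fin r)) (j : Fin N)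
    (h : ∀ a ∈ Rblock mu j, ∀ b ∈ Rblock mu j,
      d a ∈ Rblock lam i → d b ∈ Rblock lam i → swap a b = 1) :
    jmath lam mu d i j ≤ 1 := by
  refine card_le_one.mpr fun x hx y hy => ?_
  simp only [mem_inter, mem_image] at hx hy
  obtain ⟨hxl, a, ha, rfl⟩ := hx
  obtain ⟨hyl, b, hb, rfl⟩ := hy
  rw [swap_eq_one_iff.mp (h a ha b hb hxl hyl)]

end Blocks

section Parity

variable {m n r : ℕ} {lam : Fin (m + n) → ℕ} {i : Fin (m + n)} {a b : Fin r}

lemma inParabEven_swap (hi : (i : ℕ) < m) (ha : a ∈ Rblock lam i) (hb : b ∈ Rblock lam i) :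
    inParabEven (n := n) lam (swap a b) :=
  ⟨fun _ _ _ => swap_mem_Rblock ha hb,
    fun i' hi' _ => swap_apply_of_mem_Rblock_of_ne (i' := i') ha hb (by rintro rfl; omega)⟩

lemma inParabOdd_swap (hi : m ≤ (i : ℕ)) (ha : a ∈ Rblock lam i) (hb : b ∈ Rblock lam i) :
    inParabOdd (n := n) lam (swap a b) :=
  ⟨fun _ _ _ => swap_mem_Rblock ha hb,
    fun i' hi' _ => swap_apply_of_mem_Rblock_of_ne (i' := i') ha hb (by rintro rfl; omega)⟩

end Parity

theorem mixed_entries_le_one_general (m n r : ℕ) (lam mu : Fin (m + n) → ℕ)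
    (d : Perm (Fin r))
    (hcirc1 : ∀ w : Perm (Fin r),
      inParabEven (m := m) (n := n) lam (d * w * d⁻¹) →
      inParabOdd (m := m) (n := n) mu w → w = 1)
    (hcirc2 : ∀ w : Perm (Fin r),
      inParabOdd (m := m) (n := n) lam (d * w * d⁻¹) →
      inParabEven (m := m) (n := n) mu w → w = 1) :
    ∀ i j : Fin (m + n),
      (((i : ℕ) < m ∧ m ≤ (j : ℕ)) ∨ ((j : ℕ) < m ∧ m ≤ (i : ℕ))) →
      jmath (r := r) lam mu d i j ≤ 1 := by
  intro i j hij
  refine jmath_le_one_of_swap_eq_one mu d j fun a ha b hb hda hdb => ?_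
  rcases hij with ⟨hi, hj⟩ | ⟨hj, hi⟩
  · refine hcirc1 _ ?_ (inParabOdd_swap hj ha hb)
    rw [← swap_apply_apply]
    exact inParabEven_swap hi hda hdb
  · refine hcirc2 _ ?_ (inParabEven_swap hj ha hb)
    rw [← swap_apply_apply]
    exact inParabOdd_swap hi hda hdb

/-- for `d ∈ 𝒟°_{λμ}` (a distinguished representative such that
`𝔖^d_{λ^{(0)}} ∩ 𝔖_{μ^{(1)}} = 1` and `𝔖^d_{λ^{(1)}} ∩ 𝔖_{μ^{(0)}} = 1`), the matrix
`A = ȷ(λ,d,μ)` has entries `a_{i,j} ∈ {0,1}` whenever `i ≤ m < j` or `j ≤ m < i`. -/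
theorem mixed_entries_le_one (m n r : ℕ) (lam mu : Fin (m + n) → ℕ)
    (hlam : ∑ i, lam i = r) (hmu : ∑ i, mu i = r) (d : Perm (Fin r))
    (hd : isDistinguished lam mu d)
    (hcirc1 : ∀ w : Perm (Fin r),
      inParabEven (m := m) (n := n) lam (d * w * d⁻¹) →
      inParabOdd (m := m) (n := n) mu w → w = 1)
    (hcirc2 : ∀ w : Perm (Fin r),
      inParabOdd (m := m) (n := n) lam (d * w * d⁻¹) →
      inParabEven (m := m) (n := n) mu w → w = 1) :
    ∀ i j : Fin (m + n),
      (((i : ℕ) < m ∧ m ≤ (j : ℕ)) ∨ ((j : ℕ) < m ∧ m ≤ (i : ℕ))) →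
      jmath (r := r) lam mu d i j ≤ 1 :=
  mixed_entries_le_one_general m n r lam mu d hcirc1 hcirc2
end
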